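/- Fix a real number R > 0 and define p_Φ(φ) = (1/(2π))·e^{−R²} + (R/√(4π))·cos(φ)·e^{−R² sin²(φ)}·erfc(−R cos(φ)) for φ ∈ [−π, π). Then ∫_{−π}^{π} cos(φ)·p_Φ(φ) dφ ≥ ∫_0^{π/2} (2R/√π)·cos²(φ)·e^{−R² sin²(φ)} dφ − (√π/4)·R·e^{−R²}. -/

import Mathlib

open Real MeasureTheory intervalIntegral

/-- The complementary error function `erfc z = (2/√π) ∫_z^∞ e^{-t²} dt`. -/
noncomputable def erfc (z : ℝ) : ℝ := (2 / Real.sqrt π) * ∫ t in Set.Ioi z, Real.exp (-t ^ 2)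

lemma gauss_int : Integrable (fun t : ℝ => Real.exp (-t ^ 2)) := by
  have := integrable_exp_neg_mul_sq (b := 1) one_pos
  simpa using this

lemma gauss_total : (∫ t : ℝ, Real.exp (-t ^ 2)) = Real.sqrt π := by
  have := integral_gaussian 1
  simpa using this

lemma gauss_Ioi_zero : (∫ t in Set.Ioi (0:ℝ), Real.exp (-t ^ 2)) = Real.sqrt π / 2 := by
  have := integral_gaussian_Ioi 1
  simpa using this

lemma erfc_nonneg (z : ℝ) : 0 ≤ erfc z := by
  apply mul_nonneg (by positivity)
  apply MeasureTheory.setIntegral_nonneg measurableSet_Ioi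
  intro t _; positivity

lemma gauss_Ioi_le (z : ℝ) (hz : 0 ≤ z) :
    (∫ t in Set.Ioi z, Real.exp (-t ^ 2)) ≤ Real.sqrt π / 2 * Real.exp (-z ^ 2) := by
  have key : (∫ t in Set.Ioi z, Real.exp (-t ^ 2)) ≤
      ∫ t in Set.Ioi z, Real.exp (-z ^ 2) * Real.exp (-(t - z) ^ 2) := by
    apply setIntegral_mono_on gauss_int.integrableOn
    · exact ((gauss_int.comp_sub_right z).const_mul _).integrableOn
    · exact measurableSet_Ioi
    · intro t ht
      rw [← Real.exp_add]
      apply Real.exp_le_exp.mpr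
      nlinarith [Set.mem_Ioi.mp ht]
  have tr : (∫ t in Set.Ioi z, Real.exp (-(t - z) ^ 2)) = ∫ t in Set.Ioi (0:ℝ), Real.exp (-t ^ 2) := by
    have A : MeasurableEmbedding fun x : ℝ => x + z :=
      (Homeomorph.addRight z).isClosedEmbedding.measurableEmbedding
    have := MeasurableEmbedding.setIntegral_map (μ := volume) A
      (fun t => Real.exp (-(t - z) ^ 2)) (Set.Ioi z)
    rw [map_add_right_eq_self (volume : Measure ℝ) z] at this
    have hp : (fun x : ℝ => x + z) ⁻¹' Set.Ioi z = Set.Ioi 0 := by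
      ext x; simp
    rw [this, hp]
    congr 1; ext x; rw [add_sub_cancel_right]
  calc (∫ t in Set.Ioi z, Real.exp (-t ^ 2)) ≤ _ := key
    _ = Real.exp (-z ^ 2) * ∫ t in Set.Ioi z, Real.exp (-(t - z) ^ 2) := integral_const_mul _ _
    _ = Real.sqrt π / 2 * Real.exp (-z ^ 2) := by rw [tr, gauss_Ioi_zero]; ring

lemma erfc_neg_ge (z : ℝ) (hz : 0 ≤ z) : 2 - Real.exp (-z ^ 2) ≤ erfc (-z) := by
  have hsplit : (∫ t in Set.Iic (-z), Real.exp (-t ^ 2)) + (∫ t in Set.Ioi (-z), Real.exp (-t ^ 2))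
      = Real.sqrt π := by
    rw [integral_Iic_add_Ioi gauss_int.integrableOn gauss_int.integrableOn, gauss_total]
  have hrefl : (∫ t in Set.Iic (-z), Real.exp (-t ^ 2)) = ∫ t in Set.Ioi z, Real.exp (-t ^ 2) := by
    rw [← integral_comp_neg_Ioi]
    congr 1; ext t; rw [neg_pow]; norm_num
  have hle := gauss_Ioi_le z hz
  have hpos : (0:ℝ) < Real.sqrt π := Real.sqrt_pos.mpr Real.pi_pos
  have : (∫ t in Set.Ioi (-z), Real.exp (-t ^ 2)) ≥ Real.sqrt π - Real.sqrt π / 2 * Real.exp (-z ^ 2) := by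
    rw [← hsplit, hrefl] at *
    linarith
  unfold erfc
  calc 2 - Real.exp (-z ^ 2) = (2 / Real.sqrt π) * (Real.sqrt π - Real.sqrt π / 2 * Real.exp (-z ^ 2)) := by
        field_simp
    _ ≤ _ := mul_le_mul_of_nonneg_left this (by positivity)

lemma erfc_continuous : Continuous erfc := by
  have h : ∀ z : ℝ, erfc z = (2 / Real.sqrt π) * (Real.sqrt π / 2 - ∫ t in (0:ℝ)..z, Real.exp (-t ^ 2)) := by
    intro z
    unfold erfc
    congr 1
    rw [← integral_Iic_sub_Iic gauss_int.integrableOn gauss_int.integrableOn]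
    have h1 : (∫ t in Set.Iic z, Real.exp (-t ^ 2)) + (∫ t in Set.Ioi z, Real.exp (-t ^ 2))
        = Real.sqrt π := by
      rw [integral_Iic_add_Ioi gauss_int.integrableOn gauss_int.integrableOn, gauss_total]
    have h0 : (∫ t in Set.Iic (0:ℝ), Real.exp (-t ^ 2)) = Real.sqrt π / 2 := by
      have hc := integral_comp_neg_Ioi (0:ℝ) (fun t => Real.exp (-t ^ 2))
      simp only [neg_zero] at hc
      rw [← hc, ← gauss_Ioi_zero]
      congr 1; ext t; rw [neg_pow]; norm_num
    linarith
  rw [funext h]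
  exact continuous_const.mul (continuous_const.sub
    (intervalIntegral.continuous_primitive (fun a b => gauss_int.intervalIntegrable) 0))

/-- Intermediate lower bound in the proof of Lemma 1 of the paper. -/
theorem ecos_phase_intermediate_lower_bound (R : ℝ) (hR : 0 < R)
    (pΦ : ℝ → ℝ)
    (hpΦ : ∀ φ : ℝ, pΦ φ =
      (1 / (2 * π)) * Real.exp (-R ^ 2) +
      (R / Real.sqrt (4 * π)) * Real.cos φ * Real.exp (-R ^ 2 * Real.sin φ ^ 2) *
        erfc (-(R * Real.cos φ))) :
    (∫ φ in (-π)..π, Real.cos φ * pΦ φ) ≥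
      (∫ φ in (0:ℝ)..(π / 2),
        (2 * R / Real.sqrt π) * Real.cos φ ^ 2 * Real.exp (-R ^ 2 * Real.sin φ ^ 2)) -
      (Real.sqrt π / 4) * R * Real.exp (-R ^ 2) := by
  have sqrtpi_pos : (0:ℝ) < Real.sqrt π := Real.sqrt_pos.mpr Real.pi_pos
  set c : ℝ := R / Real.sqrt (4 * π) with hc
  have hc_pos : 0 < c := div_pos hR (Real.sqrt_pos.mpr (by positivity))
  have hc_eq : c = R / (2 * Real.sqrt π) := by
    rw [hc, show (4:ℝ) * π = 2^2 * π by norm_num, Real.sqrt_mul (by positivity),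
      Real.sqrt_sq (by norm_num)]
  set g : ℝ → ℝ := fun φ => Real.cos φ ^ 2 * Real.exp (-R ^ 2 * Real.sin φ ^ 2) *
    erfc (-(R * Real.cos φ)) with hgdef
  have hce : Continuous fun φ : ℝ => Real.exp (-R ^ 2 * Real.sin φ ^ 2) :=
    Real.continuous_exp.comp (continuous_const.mul (Real.continuous_sin.pow 2))
  have hce' : Continuous fun φ : ℝ => Real.exp (-R ^ 2 * Real.cos φ ^ 2) :=
    Real.continuous_exp.comp (continuous_const.mul (Real.continuous_cos.pow 2))
  have hg_cont : Continuous g :=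
    ((Real.continuous_cos.pow 2).mul hce).mul
      (erfc_continuous.comp (continuous_const.mul Real.continuous_cos).neg)
  have hg_nonneg : ∀ φ, 0 ≤ g φ := fun φ => by
    apply mul_nonneg (mul_nonneg (by positivity) (by positivity)) (erfc_nonneg _)
  -- rewrite the LHS
  have key : (∫ φ in (-π)..π, Real.cos φ * pΦ φ) = c * ∫ φ in (-π)..π, g φ := by
    have : (∫ φ in (-π)..π, Real.cos φ * pΦ φ)
        = ∫ φ in (-π)..π, ((1 / (2 * π)) * Real.exp (-R ^ 2) * Real.cos φ + c * g φ) := by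
      apply intervalIntegral.integral_congr
      intro φ _
      simp only [hpΦ, hgdef]
      ring
    rw [this, intervalIntegral.integral_add (f := fun φ => (1 / (2 * π)) * Real.exp (-R ^ 2) * Real.cos φ) (g := fun φ => c * g φ)
      ((continuous_const.mul Real.continuous_cos).intervalIntegrable _ _)
      ((continuous_const.mul hg_cont).intervalIntegrable _ _),
      intervalIntegral.integral_const_mul, integral_cos, intervalIntegral.integral_const_mul]
    simp
  -- evenness
  have heven : ∀ φ : ℝ, g (-φ) = g φ := by
    intro φ; simp [hgdef]
  have hsplit : (∫ φ in (-π)..π, g φ) = 2 * ∫ φ in (0:ℝ)..π, g φ := by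
    have h1 : (∫ φ in (-π)..(0:ℝ), g φ) = ∫ φ in (0:ℝ)..π, g φ := by
      have h2 := intervalIntegral.integral_comp_neg (a := (0:ℝ)) (b := π) g
      simp only [heven, neg_zero] at h2
      exact h2.symm
    rw [← intervalIntegral.integral_add_adjacent_intervals
      (hg_cont.intervalIntegrable (-π) 0) (hg_cont.intervalIntegrable 0 π), h1]
    ring
  have hsplit2 : (∫ φ in (0:ℝ)..π, g φ) =
      (∫ φ in (0:ℝ)..(π/2), g φ) + ∫ φ in (π/2:ℝ)..π, g φ :=
    (intervalIntegral.integral_add_adjacent_intervals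
      (hg_cont.intervalIntegrable 0 (π/2)) (hg_cont.intervalIntegrable (π/2) π)).symm
  have htail : (0:ℝ) ≤ ∫ φ in (π/2:ℝ)..π, g φ := by
    apply intervalIntegral.integral_nonneg (by linarith [Real.pi_pos])
    intro u _; exact hg_nonneg u
  -- pointwise bound on [0, π/2]
  set h : ℝ → ℝ := fun φ => Real.cos φ ^ 2 * Real.exp (-R ^ 2 * Real.sin φ ^ 2) *
    (2 - Real.exp (-R ^ 2 * Real.cos φ ^ 2)) with hhdef
  have hh_cont : Continuous h :=
    ((Real.continuous_cos.pow 2).mul hce).mul (continuous_const.sub hce')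
  have hmono : (∫ φ in (0:ℝ)..(π/2), h φ) ≤ ∫ φ in (0:ℝ)..(π/2), g φ := by
    apply intervalIntegral.integral_mono_on (by positivity)
      (hh_cont.intervalIntegrable _ _) (hg_cont.intervalIntegrable _ _)
    intro φ hφ
    have hcos : 0 ≤ Real.cos φ :=
      Real.cos_nonneg_of_mem_Icc ⟨by linarith [hφ.1, Real.pi_pos], hφ.2⟩
    have hz : 0 ≤ R * Real.cos φ := mul_nonneg hR.le hcos
    have := erfc_neg_ge (R * Real.cos φ) hz
    have hex : Real.exp (-(R * Real.cos φ) ^ 2) = Real.exp (-R ^ 2 * Real.cos φ ^ 2) := by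
      ring_nf
    rw [hex] at this
    exact mul_le_mul_of_nonneg_left this (by positivity)
  -- compute ∫ h
  have hJ : (∫ φ in (0:ℝ)..(π/2), h φ) =
      2 * (∫ φ in (0:ℝ)..(π/2), Real.cos φ ^ 2 * Real.exp (-R ^ 2 * Real.sin φ ^ 2))
      - Real.exp (-R ^ 2) * (π / 4) := by
    have hpt : ∀ φ : ℝ, h φ = 2 * (Real.cos φ ^ 2 * Real.exp (-R ^ 2 * Real.sin φ ^ 2))
        - Real.exp (-R ^ 2) * Real.cos φ ^ 2 := by
      intro φ
      have : Real.exp (-R ^ 2 * Real.sin φ ^ 2) * Real.exp (-R ^ 2 * Real.cos φ ^ 2)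
          = Real.exp (-R ^ 2) := by
        rw [← Real.exp_add]
        congr 1
        nlinarith [Real.sin_sq_add_cos_sq φ]
      rw [hhdef]
      dsimp only
      nlinarith [this]
    rw [intervalIntegral.integral_congr (fun φ _ => hpt φ),
      intervalIntegral.integral_sub (f := fun φ => 2 * (Real.cos φ ^ 2 * Real.exp (-R ^ 2 * Real.sin φ ^ 2))) (g := fun φ => Real.exp (-R ^ 2) * Real.cos φ ^ 2)
        ((continuous_const.mul ((Real.continuous_cos.pow 2).mul hce)).intervalIntegrable _ _)
        ((continuous_const.mul (Real.continuous_cos.pow 2)).intervalIntegrable _ _),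
      intervalIntegral.integral_const_mul, intervalIntegral.integral_const_mul, integral_cos_sq]
    simp
    ring
  -- assemble
  set J : ℝ := ∫ φ in (0:ℝ)..(π/2), Real.cos φ ^ 2 * Real.exp (-R ^ 2 * Real.sin φ ^ 2) with hJdef
  have hRHS : (∫ φ in (0:ℝ)..(π / 2),
      (2 * R / Real.sqrt π) * Real.cos φ ^ 2 * Real.exp (-R ^ 2 * Real.sin φ ^ 2))
      = (2 * R / Real.sqrt π) * J := by
    rw [hJdef, ← intervalIntegral.integral_const_mul]
    apply intervalIntegral.integral_congr
    intro φ _; ring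
  rw [key, hsplit, hsplit2, hRHS, ge_iff_le]
  have hfinal : c * (2 * ((∫ φ in (0:ℝ)..(π/2), g φ) + ∫ φ in (π/2:ℝ)..π, g φ))
      ≥ c * (2 * (∫ φ in (0:ℝ)..(π/2), h φ)) := by
    apply mul_le_mul_of_nonneg_left _ hc_pos.le
    nlinarith [hmono, htail]
  have hval : c * (2 * (∫ φ in (0:ℝ)..(π/2), h φ))
      = 2 * R / Real.sqrt π * J - Real.sqrt π / 4 * R * Real.exp (-R ^ 2) := by
    rw [hJ, hc_eq]
    have hπ : Real.sqrt π ^ 2 = π := Real.sq_sqrt Real.pi_pos.le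
    field_simp
    ring_nf
    linear_combination (Real.exp (-R ^ 2)) * hπ
  linarith [hfinal, hval ▸ hfinal]
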